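/- arXiv:1608.00401 — 6 statements merged into one kernel-verified Lean document; each statement's English description precedes it below -/
import Mathlib

section
/- Let (G,H,t,α) be a crossed module. For all g₁ ∈ G and h₁, h₂, h₁', h₂' ∈ H, setting g₂ := t(h₁')·g₁, one has α(g₁⁻¹, h₁·h₁')·α(g₂⁻¹, h₂·h₂') = α(g₁⁻¹, h₁·h₂·h₂'·h₁'). (This identity is the compatibility with composition of the Γ-action R((p,h),(h',g)) := (p·g, α(g⁻¹, h·h')) on the action groupoid associated to an ordinary principal G-bundle, used in the paper's construction realizing ordinary principal bundles as principal 2-bundles.) -/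
/-- A crossed module of groups. -/
structure CrossedModule (G H : Type*) [Group G] [Group H] where
  t : H → G
  α : G → H → H
  t_mul : ∀ h₁ h₂ : H, t (h₁ * h₂) = t h₁ * t h₂
  α_one : ∀ h : H, α 1 h = h
  α_mul : ∀ (g₁ g₂ : G) (h : H), α (g₁ * g₂) h = α g₁ (α g₂ h)
  α_hom : ∀ (g : G) (h₁ h₂ : H), α g (h₁ * h₂) = α g h₁ * α g h₂
  peiffer : ∀ h x : H, α (t h) x = h * x * h⁻¹
  equivariance : ∀ (g : G) (h : H), t (α g h) = g * t h * g⁻¹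

theorem CrossedModule.t_inv {G H : Type*} [Group G] [Group H]
    (cm : CrossedModule G H) (h : H) : cm.t h⁻¹ = (cm.t h)⁻¹ := by
  have h1 : cm.t 1 = 1 := by
    have := cm.t_mul 1 1
    simpa using this.symm
  have := cm.t_mul h⁻¹ h
  simp [h1] at this
  exact eq_inv_of_mul_eq_one_left this.symm

/-- Compatibility with composition of the `Γ`-action on the action groupoid
associated to an ordinary principal `G`-bundle: for `g₂ := t(h₁')·g₁`,
`α(g₁⁻¹, h₁·h₁')·α(g₂⁻¹, h₂·h₂') = α(g₁⁻¹, h₁·h₂·h₂'·h₁')`. -/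
theorem action_groupoid_gamma_action_comp
    {G H : Type*} [Group G] [Group H] (cm : CrossedModule G H) :
    ∀ (g₁ : G) (h₁ h₂ h₁' h₂' : H),
      cm.α g₁⁻¹ (h₁ * h₁') * cm.α (cm.t h₁' * g₁)⁻¹ (h₂ * h₂') =
        cm.α g₁⁻¹ (h₁ * h₂ * h₂' * h₁') := by
  intro g₁ h₁ h₂ h₁' h₂'
  have key : cm.α (cm.t h₁' * g₁)⁻¹ (h₂ * h₂')
      = cm.α g₁⁻¹ (h₁'⁻¹ * (h₂ * h₂') * h₁') := by
    rw [mul_inv_rev, ← cm.t_inv, cm.α_mul, cm.peiffer, inv_inv]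
  rw [key, ← cm.α_hom]
  congr 1
  group
end

section
/- Let (g,a) be a Γ-cocycle with respect to a cover {U_i}_{i∈I} of a set X, and let h_i : U_i → G and e_{ij} : U_i ∩ U_j → H be arbitrary functions. Define, pointwise, g'_{ij} := t(e_{ij})·h_j·g_{ij}·h_i⁻¹ and a'_{ijk} := e_{ik}·α(h_k, a_{ijk})·e_{jk}⁻¹·α(g'_{jk}, e_{ij})⁻¹. Then (g',a') is again a Γ-cocycle, and the pair (h,e) is an equivalence from (g,a) to (g',a'). -/
/-- A `Γ`-cocycle with respect to a family of subsets `U : I → Set X`, for the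
Lie 2-group `Γ` associated to a crossed module `(G,H,t,α)`. -/
structure GammaCocycle {G H : Type*} [Group G] [Group H] (cm : CrossedModule G H)
    {X I : Type*} (U : I → Set X) where
  g : I → I → X → G
  a : I → I → I → X → H
  cocycle_g : ∀ (i j k : I) (x : X), x ∈ U i → x ∈ U j → x ∈ U k →
    g i k x = cm.t (a i j k x) * g j k x * g i j x
  cocycle_a : ∀ (i j k l : I) (x : X), x ∈ U i → x ∈ U j → x ∈ U k → x ∈ U l →
    a i k l x * cm.α (g k l x) (a i j k x) = a i j l x * a j k l x

namespace CMaux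
variable {G H : Type*} [Group G] [Group H] (cm : CrossedModule G H)

lemma t_one : cm.t 1 = 1 := by
  have := cm.t_mul 1 1
  simpa using this

lemma t_inv (h : H) : cm.t h⁻¹ = (cm.t h)⁻¹ := by
  have := cm.t_mul h⁻¹ h
  simp [t_one cm] at this
  exact eq_inv_of_mul_eq_one_left this.symm

lemma α_one' (g : G) : cm.α g 1 = 1 := by
  have := cm.α_hom g 1 1
  simpa using this

lemma α_inv (g : G) (h : H) : cm.α g h⁻¹ = (cm.α g h)⁻¹ := by
  have := cm.α_hom g h⁻¹ h
  simp [α_one' cm] at this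
  exact eq_inv_of_mul_eq_one_left this.symm

lemma α_cancel (g : G) (h : H) : cm.α g (cm.α g⁻¹ h) = h := by
  rw [← cm.α_mul]; simp [cm.α_one]

lemma α_cancel' (g : G) (h : H) : cm.α g⁻¹ (cm.α g h) = h := by
  rw [← cm.α_mul]; simp [cm.α_one]

lemma part1_aux (hi hj hk gij gjk : G) (aijk eij eik ejk : H) :
    cm.t eik * hk * (cm.t aijk * gjk * gij) * hi⁻¹
    = cm.t (eik * cm.α hk aijk * ejk⁻¹ *
          (cm.α (cm.t ejk * hk * gjk * hj⁻¹) eij)⁻¹) *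
        (cm.t ejk * hk * gjk * hj⁻¹) * (cm.t eij * hj * gij * hi⁻¹) := by
  simp [cm.t_mul, t_inv cm, cm.equivariance, mul_assoc]

lemma part2_aux (hj hk hl gjk gkl : G)
    (aijk aijl aikl ajkl eij eik eil ejk ejl ekl : H)
    (Ha : aikl * cm.α gkl aijk = aijl * ajkl) :
    (eil * cm.α hl aikl * ekl⁻¹ *
        (cm.α (cm.t ekl * hl * gkl * hk⁻¹) eik)⁻¹) *
      cm.α (cm.t ekl * hl * gkl * hk⁻¹)
        (eik * cm.α hk aijk * ejk⁻¹ *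
          (cm.α (cm.t ejk * hk * gjk * hj⁻¹) eij)⁻¹)
    = (eil * cm.α hl aijl * ejl⁻¹ *
        (cm.α (cm.t ejl * hl * (cm.t ajkl * gkl * gjk) * hj⁻¹) eij)⁻¹) *
      (ejl * cm.α hl ajkl * ekl⁻¹ *
        (cm.α (cm.t ekl * hl * gkl * hk⁻¹) ejk)⁻¹) := by
  have key : cm.α gkl aijk = aikl⁻¹ * (aijl * ajkl) := by
    rw [← Ha]; group
  simp only [cm.α_mul, cm.α_hom, α_inv cm, cm.peiffer, α_cancel cm, α_cancel' cm,
    key, mul_inv_rev, inv_inv, mul_assoc]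
  group

end CMaux

/-- Transforming a `Γ`-cocycle by arbitrary functions `h_i, e_{ij}` yields again a
`Γ`-cocycle, and `(h,e)` is an equivalence from the old cocycle to the new one. -/
theorem transformed_cocycle_is_cocycle
    {G H : Type*} [Group G] [Group H] (cm : CrossedModule G H)
    {X I : Type*} (U : I → Set X) (hU : ∀ x : X, ∃ i : I, x ∈ U i)
    (c : GammaCocycle cm U)
    (h : I → X → G) (e : I → I → X → H)
    (g' : I → I → X → G) (a' : I → I → I → X → H)
    (hg' : ∀ (i j : I) (x : X), x ∈ U i → x ∈ U j →
      g' i j x = cm.t (e i j x) * h j x * c.g i j x * (h i x)⁻¹)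
    (ha' : ∀ (i j k : I) (x : X), x ∈ U i → x ∈ U j → x ∈ U k →
      a' i j k x =
        e i k x * cm.α (h k x) (c.a i j k x) * (e j k x)⁻¹ *
          (cm.α (g' j k x) (e i j x))⁻¹) :
    -- `(g',a')` is a `Γ`-cocycle
    ((∀ (i j k : I) (x : X), x ∈ U i → x ∈ U j → x ∈ U k →
        g' i k x = cm.t (a' i j k x) * g' j k x * g' i j x) ∧
     (∀ (i j k l : I) (x : X), x ∈ U i → x ∈ U j → x ∈ U k → x ∈ U l →
        a' i k l x * cm.α (g' k l x) (a' i j k x) = a' i j l x * a' j k l x)) ∧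
    -- `(h,e)` is an equivalence from `(g,a)` to `(g',a')`
    ((∀ (i j : I) (x : X), x ∈ U i → x ∈ U j →
        g' i j x * h i x = cm.t (e i j x) * h j x * c.g i j x) ∧
     (∀ (i j k : I) (x : X), x ∈ U i → x ∈ U j → x ∈ U k →
        a' i j k x * cm.α (g' j k x) (e i j x) * e j k x =
          e i k x * cm.α (h k x) (c.a i j k x))) := by
  refine ⟨⟨?_, ?_⟩, ?_, ?_⟩
  · intro i j k x hxi hxj hxk
    rw [ha' i j k x hxi hxj hxk, hg' i k x hxi hxk, hg' j k x hxj hxk,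
      hg' i j x hxi hxj, c.cocycle_g i j k x hxi hxj hxk]
    exact CMaux.part1_aux cm _ _ _ _ _ _ _ _ _
  · intro i j k l x hxi hxj hxk hxl
    rw [ha' i k l x hxi hxk hxl, ha' i j k x hxi hxj hxk, ha' i j l x hxi hxj hxl,
      ha' j k l x hxj hxk hxl, hg' k l x hxk hxl, hg' j k x hxj hxk,
      hg' j l x hxj hxl, c.cocycle_g j k l x hxj hxk hxl]
    exact CMaux.part2_aux cm _ _ _ _ _ _ _ _ _ _ _ _ _ _ _
      (c.cocycle_a i j k l x hxi hxj hxk hxl)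
  · intro i j x hxi hxj
    rw [hg' i j x hxi hxj]
    group
  · intro i j k x hxi hxj hxk
    rw [ha' i j k x hxi hxj hxk]
    group
end

section
/- Let (g,a) be a Γ-cocycle with respect to a cover {U_i}_{i∈I} of a set X such that g_{ii} = 1, a_{iij} = 1 and a_{ijj} = 1 for all i, j ∈ I, and suppose the index set I carries a linear order. Set h_i := 1, and e_{ij} := 1 if i ≤ j, e_{ij} := a_{jij} if i > j, and let (g',a') be the transformed cocycle given pointwise by g'_{ij} := t(e_{ij})·g_{ij} and a'_{ijk} := e_{ik}·a_{ijk}·e_{jk}⁻¹·α(g'_{jk}, e_{ij})⁻¹. Then (g',a') is normalized: g'_{ii} = 1 and a'_{iij} = a'_{ijj} = a'_{iji} = 1 for all i, j ∈ I. (Second normalization step of Remark 2.1 of the paper.) -/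
/-!
Because `e_{kk} = 1` and `g_{kk} = 1`, the identities `g'_{ii} = a'_{iij} = a'_{ijj} = 1` are the
hypotheses `g_{ii} = a_{iij} = a_{ijj} = 1`, and for `i < j` the factor `e_{ji} = a_{iji}` cancels
in `a'_{iji}`. For `j < i` one has `a'_{iji} = a_{iji} · α(g_{ji}, a_{jij})⁻¹`, and the cocycle
condition at `(j, i, j, i)` says exactly that `α(g_{ji}, a_{jij}) = a_{iji}` once `a_{jji}` and
`a_{jii}` are trivial.
-/

namespace CrossedModule

variable {G H : Type*} [Group G] [Group H] (cm : CrossedModule G H)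

theorem t_one : cm.t 1 = 1 :=
  (MonoidHom.mk' cm.t cm.t_mul).map_one

theorem α_apply_one (g : G) : cm.α g 1 = 1 :=
  (MonoidHom.mk' (cm.α g) (cm.α_hom g)).map_one

end CrossedModule

namespace GammaCocycle

variable {G H : Type*} [Group G] [Group H] {cm : CrossedModule G H} {X I : Type*}
  {U : I → Set X}

theorem α_g_a_eq_a_swap (c : GammaCocycle cm U) {i j : I} {x : X} (hi : x ∈ U i)
    (hj : x ∈ U j) (hjji : c.a j j i x = 1) (hjii : c.a j i i x = 1) :
    cm.α (c.g j i x) (c.a j i j x) = c.a i j i x := by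
  simpa [hjji, hjii] using c.cocycle_a j i j i x hj hi hj hi

end GammaCocycle

theorem second_normalization_step_general
    {G H : Type*} [Group G] [Group H] (cm : CrossedModule G H)
    {X I : Type*} [LinearOrder I] (U : I → Set X)
    (c : GammaCocycle cm U)
    (hgii : ∀ (i : I) (x : X), x ∈ U i → c.g i i x = 1)
    (haiij : ∀ (i j : I) (x : X), x ∈ U i → x ∈ U j → c.a i i j x = 1)
    (haijj : ∀ (i j : I) (x : X), x ∈ U i → x ∈ U j → c.a i j j x = 1)
    (e : I → I → X → H)
    (he_le : ∀ i j : I, i ≤ j → ∀ x : X, e i j x = 1)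
    (he_gt : ∀ i j : I, j < i → ∀ x : X, x ∈ U i → x ∈ U j → e i j x = c.a j i j x)
    (g' : I → I → X → G) (a' : I → I → I → X → H)
    (hg' : ∀ (i j : I) (x : X), x ∈ U i → x ∈ U j →
      g' i j x = cm.t (e i j x) * c.g i j x)
    (ha' : ∀ (i j k : I) (x : X), x ∈ U i → x ∈ U j → x ∈ U k →
      a' i j k x =
        e i k x * c.a i j k x * (e j k x)⁻¹ * (cm.α (g' j k x) (e i j x))⁻¹) :
    ∀ (i j : I) (x : X), x ∈ U i → x ∈ U j →
      g' i i x = 1 ∧ a' i i j x = 1 ∧ a' i j j x = 1 ∧ a' i j i x = 1 := by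
  intro i j x hi hj
  have he_self (k : I) : e k k x = 1 := he_le k k le_rfl x
  have hg'_self {k : I} (hk : x ∈ U k) : g' k k x = 1 := by
    rw [hg' k k x hk hk, he_self, cm.t_one, hgii k x hk, one_mul]
  refine ⟨hg'_self hi, ?_, ?_, ?_⟩
  · rw [ha' i i j x hi hi hj, haiij i j x hi hj, he_self, cm.α_apply_one]
    group
  · rw [ha' i j j x hi hj hj, haijj i j x hi hj, he_self, hg'_self hj, cm.α_one]
    group
  · rw [ha' i j i x hi hj hi, he_self, one_mul]
    rcases lt_trichotomy i j with h | rfl | h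
    · rw [he_le i j h.le x, cm.α_apply_one, he_gt j i h x hj hi]
      group
    · rw [he_self, cm.α_apply_one, haiij i i x hi hi]
      group
    · rw [he_le j i h.le x, he_gt i j h x hi hj, hg' j i x hj hi, he_le j i h.le x, cm.t_one,
        one_mul, c.α_g_a_eq_a_swap hi hj (haiij j i x hj hi) (haijj j i x hj hi)]
      group

/-- Second normalization step: if `g_{ii} = 1`, `a_{iij} = 1`, `a_{ijj} = 1` and the
index set is linearly ordered, transforming by `h_i := 1` and `e_{ij} := 1` for
`i ≤ j`, `e_{ij} := a_{jij}` for `i > j` yields a normalized cocycle. -/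
theorem second_normalization_step
    {G H : Type*} [Group G] [Group H] (cm : CrossedModule G H)
    {X I : Type*} [LinearOrder I] (U : I → Set X) (hU : ∀ x : X, ∃ i : I, x ∈ U i)
    (c : GammaCocycle cm U)
    (hgii : ∀ (i : I) (x : X), x ∈ U i → c.g i i x = 1)
    (haiij : ∀ (i j : I) (x : X), x ∈ U i → x ∈ U j → c.a i i j x = 1)
    (haijj : ∀ (i j : I) (x : X), x ∈ U i → x ∈ U j → c.a i j j x = 1)
    (e : I → I → X → H)
    (he_le : ∀ i j : I, i ≤ j → ∀ x : X, e i j x = 1)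
    (he_gt : ∀ i j : I, j < i → ∀ x : X, x ∈ U i → x ∈ U j → e i j x = c.a j i j x)
    (g' : I → I → X → G) (a' : I → I → I → X → H)
    (hg' : ∀ (i j : I) (x : X), x ∈ U i → x ∈ U j →
      g' i j x = cm.t (e i j x) * c.g i j x)
    (ha' : ∀ (i j k : I) (x : X), x ∈ U i → x ∈ U j → x ∈ U k →
      a' i j k x =
        e i k x * c.a i j k x * (e j k x)⁻¹ * (cm.α (g' j k x) (e i j x))⁻¹) :
    ∀ (i j : I) (x : X), x ∈ U i → x ∈ U j →
      g' i i x = 1 ∧ a' i i j x = 1 ∧ a' i j j x = 1 ∧ a' i j i x = 1 :=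
  second_normalization_step_general cm U c hgii haiij haijj e he_le he_gt g' a' hg' ha'
end

section
/- Let (g,a) be a Γ-cocycle with respect to a cover {U_i}_{i∈I} of a set X. For every point x ∈ U_i ∩ U_j ∩ U_k ∩ U_l and all h₂, h₃ ∈ H, one has a_{ijl}(x)·α(g_{jl}(x), h₃)·a_{jkl}(x)·α(g_{kl}(x), h₂) = a_{ikl}(x)·α(g_{kl}(x), a_{ijk}(x)·α(g_{jk}(x), h₃)·h₂). (This is the associativity of the composition (i,j,x,h₂,g₂)∘(j,k,x,h₁,g₁) := (i,k,x, a_{ijk}(x)·α(g_{jk}(x),h₂)·h₁, g₁) in the groupoid 𝒫_{(g,a)} reconstructed from the cocycle in Section 3.2 of the paper.) -/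
/-- Associativity identity for the composition in the groupoid `𝒫_{(g,a)}`
reconstructed from a `Γ`-cocycle. -/
theorem reconstructed_groupoid_associativity_identity
    {G H : Type*} [Group G] [Group H] (cm : CrossedModule G H)
    {X I : Type*} (U : I → Set X) (hU : ∀ x : X, ∃ i : I, x ∈ U i)
    (c : GammaCocycle cm U) :
    ∀ (i j k l : I) (x : X), x ∈ U i → x ∈ U j → x ∈ U k → x ∈ U l →
      ∀ h₂ h₃ : H,
        c.a i j l x * cm.α (c.g j l x) h₃ * c.a j k l x * cm.α (c.g k l x) h₂ =
          c.a i k l x * cm.α (c.g k l x) (c.a i j k x * cm.α (c.g j k x) h₃ * h₂) := by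
  intro i j k l x hi hj hk hl h₂ h₃
  have hgjl := c.cocycle_g j k l x hj hk hl
  have ha := c.cocycle_a i j k l x hi hj hk hl
  have hA : cm.α (c.g k l x) (c.a i j k x) =
      (c.a i k l x)⁻¹ * (c.a i j l x * c.a j k l x) := by
    rw [← ha]; group
  rw [cm.α_hom, cm.α_hom, hA, hgjl, cm.α_mul, cm.α_mul, cm.peiffer]
  group
end

section
/- Let (g,a) and (g',a') be Γ-cocycles with respect to the same cover {U_i}_{i∈I} of a set X, and let (h_i, e_{ij}) be an equivalence from (g,a) to (g',a'). Then for every point x ∈ U_i ∩ U_j ∩ U_k and all h₁, h₂ ∈ H: e_{ik}(x)·α(h_k(x), a_{ijk}(x)·α(g_{jk}(x),h₂)·h₁) = a'_{ijk}(x)·α(g'_{jk}(x), e_{ij}(x)·α(h_j(x),h₂))·e_{jk}(x)·α(h_k(x),h₁). (This identity expresses that the map φ(i,j,x,h,g) := (i,j,x, e_{ij}(x)·α(h_j(x),h), h_j(x)·g) between the reconstructed groupoids 𝒫_{(g,a)} and 𝒫_{(g',a')} respects composition, from the proof of Theorem 3.1 of the paper.) -/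
/-- An equivalence `(h,e)` between `Γ`-cocycles `(g,a)` and `(g',a')` induces a map
between the reconstructed groupoids which respects composition: the identity
`e_{ik}·α(h_k, a_{ijk}·α(g_{jk},h₂)·h₁)
  = a'_{ijk}·α(g'_{jk}, e_{ij}·α(h_j,h₂))·e_{jk}·α(h_k,h₁)`. -/
theorem equivalence_respects_composition
    {G H : Type*} [Group G] [Group H] (cm : CrossedModule G H)
    {X I : Type*} (U : I → Set X) (hU : ∀ x : X, ∃ i : I, x ∈ U i)
    (c c' : GammaCocycle cm U)
    (h : I → X → G) (e : I → I → X → H)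
    (hequiv_g : ∀ (i j : I) (x : X), x ∈ U i → x ∈ U j →
      c'.g i j x * h i x = cm.t (e i j x) * h j x * c.g i j x)
    (hequiv_a : ∀ (i j k : I) (x : X), x ∈ U i → x ∈ U j → x ∈ U k →
      c'.a i j k x * cm.α (c'.g j k x) (e i j x) * e j k x =
        e i k x * cm.α (h k x) (c.a i j k x)) :
    ∀ (i j k : I) (x : X), x ∈ U i → x ∈ U j → x ∈ U k →
      ∀ h₁ h₂ : H,
        e i k x * cm.α (h k x) (c.a i j k x * cm.α (c.g j k x) h₂ * h₁) =
          c'.a i j k x * cm.α (c'.g j k x) (e i j x * cm.α (h j x) h₂) *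
            e j k x * cm.α (h k x) h₁ := by
  intro i j k x hi hj hk h₁ h₂
  have hg := hequiv_g j k x hj hk
  have ha := hequiv_a i j k x hi hj hk
  have key : cm.α (c'.g j k x) (cm.α (h j x) h₂) =
      e j k x * cm.α (h k x) (cm.α (c.g j k x) h₂) * (e j k x)⁻¹ := by
    have h2 := congrArg (fun g => cm.α g h₂) hg
    simp only [cm.α_mul] at h2
    rw [cm.peiffer] at h2
    exact h2
  have ha2 : cm.α (h k x) (c.a i j k x) =
      (e i k x)⁻¹ * (c'.a i j k x * cm.α (c'.g j k x) (e i j x) * e j k x) := by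
    rw [ha]; group
  simp only [cm.α_hom]
  rw [ha2, key]
  group
end

section
/- Let (g,a) be a Γ-cocycle with respect to a cover {U_i}_{i∈I} of a set X. For every point x ∈ U_i ∩ U_j ∩ U_k, all h₁, h₂, h₁', h₂' ∈ H and g₁ ∈ G, setting g₂ := g_{jk}(x)⁻¹·t(h₁)·g₁, one has α(g_{jk}(x), h₂·α(g₂, h₂'))·h₁·α(g₁, h₁') = α(g_{jk}(x), h₂)·h₁·α(g₁, h₂'·h₁'). (This identity expresses that the Γ-action R((i,j,x,h,g),(h',g')) := (i,j,x, h·α(g,h'), g·g') on the reconstructed groupoid 𝒫_{(g,a)} respects composition, i.e. is a functor, from Section 3.2 of the paper.) -/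
/-- The `Γ`-action `R((i,j,x,h,g),(h',g')) := (i,j,x, h·α(g,h'), g·g')` on the
reconstructed groupoid `𝒫_{(g,a)}` respects composition: for
`g₂ := g_{jk}(x)⁻¹·t(h₁)·g₁`,
`α(g_{jk}(x), h₂·α(g₂,h₂'))·h₁·α(g₁,h₁') = α(g_{jk}(x), h₂)·h₁·α(g₁, h₂'·h₁')`. -/
theorem gamma_action_respects_composition
    {G H : Type*} [Group G] [Group H] (cm : CrossedModule G H)
    {X I : Type*} (U : I → Set X) (hU : ∀ x : X, ∃ i : I, x ∈ U i)
    (c : GammaCocycle cm U) :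
    ∀ (i j k : I) (x : X), x ∈ U i → x ∈ U j → x ∈ U k →
      ∀ (h₁ h₂ h₁' h₂' : H) (g₁ g₂ : G),
        g₂ = (c.g j k x)⁻¹ * cm.t h₁ * g₁ →
        cm.α (c.g j k x) (h₂ * cm.α g₂ h₂') * h₁ * cm.α g₁ h₁' =
          cm.α (c.g j k x) h₂ * h₁ * cm.α g₁ (h₂' * h₁') := by
  intro i j k x hi hj hk h₁ h₂ h₁' h₂' g₁ g₂ hg₂
  subst hg₂
  rw [cm.α_hom, ← cm.α_mul]
  have h : c.g j k x * ((c.g j k x)⁻¹ * cm.t h₁ * g₁) = cm.t h₁ * g₁ := by group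
  rw [h, cm.α_mul, cm.peiffer, cm.α_hom]
  group
end
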